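/- arXiv:2507.13530 — 4 statements merged into one kernel-verified Lean document; each statement's English description precedes it below -/
import Mathlib

section
/- Let n₁, n₂ ∈ ℝ³ be unit vectors with n₂ ≠ n₁ and n₂ ≠ −n₁, and let ξ ∈ ℝ³ satisfy ⟨ξ, n₁⟩ = 0. Then ξ − (⟨ξ, log_{n₁}(n₂)⟩ / d(n₁,n₂)²)·(log_{n₁}(n₂) + log_{n₂}(n₁)) = ξ − (⟨ξ, n₂⟩/(1 + ⟨n₂,n₁⟩))·(n₂ + n₁); i.e., the two formulas for the parallel transport of ξ from the tangent space at n₁ to the tangent space at n₂ on the unit sphere agree. -/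
open scoped InnerProductSpace

noncomputable section
open Classical

abbrev E3 : Type := EuclideanSpace ℝ (Fin 3)

/-- Cross product on `E3`. -/
def cross3 (a b : E3) : E3 :=
  (EuclideanSpace.equiv (Fin 3) ℝ).symm
    (crossProduct ((EuclideanSpace.equiv (Fin 3) ℝ) a) ((EuclideanSpace.equiv (Fin 3) ℝ) b))

/-- Geodesic distance on the unit sphere. -/
def sphDist (n₁ n₂ : E3) : ℝ := Real.arccos ⟪n₁, n₂⟫_ℝ

/-- The logarithmic map of the unit sphere. -/
def sphLog (n₁ n₂ : E3) : E3 :=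
  if n₂ = n₁ then 0
  else (Real.arccos ⟪n₁, n₂⟫_ℝ / ‖n₂ - ⟪n₁, n₂⟫_ℝ • n₁‖) • (n₂ - ⟪n₁, n₂⟫_ℝ • n₁)

/-- Parallel transport along the shortest geodesic of the unit sphere. -/
def ptrans (n₁ n₂ ξ : E3) : E3 :=
  ξ - (⟪ξ, n₂⟫_ℝ / (1 + ⟪n₂, n₁⟫_ℝ)) • (n₂ + n₁)

theorem parallel_transport_formulas_agree (n₁ n₂ ξ : E3)
    (hn₁ : ‖n₁‖ = 1) (hn₂ : ‖n₂‖ = 1)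
    (hne : n₂ ≠ n₁) (hne' : n₂ ≠ -n₁)
    (hξ : ⟪ξ, n₁⟫_ℝ = 0) :
    ξ - (⟪ξ, sphLog n₁ n₂⟫_ℝ / (sphDist n₁ n₂) ^ 2) • (sphLog n₁ n₂ + sphLog n₂ n₁)
      = ξ - (⟪ξ, n₂⟫_ℝ / (1 + ⟪n₂, n₁⟫_ℝ)) • (n₂ + n₁) := by
  have hne₂ : n₁ ≠ n₂ := fun h => hne h.symm
  set c : ℝ := ⟪n₁, n₂⟫_ℝ with hc
  have hcc : ⟪n₂, n₁⟫_ℝ = c := (real_inner_comm n₂ n₁).symm ▸ (real_inner_comm n₁ n₂)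
  have habs : |c| ≤ 1 := by
    have := abs_real_inner_le_norm n₁ n₂
    simpa [hn₁, hn₂] using this
  have hc1 : c < 1 := by
    rcases lt_or_eq_of_le (abs_le.mp habs).2 with h | h
    · exact h
    · exact absurd ((inner_eq_one_iff_of_norm_eq_one hn₁ hn₂).mp h).symm hne
  have hc2 : -1 < c := by
    rcases lt_or_eq_of_le (abs_le.mp habs).1 with h | h
    · exact h
    · exfalso
      have h1 : ⟪n₁, -n₂⟫_ℝ = 1 := by
        rw [inner_neg_right]; rw [← hc]; linarith
      have h2 := (inner_eq_one_iff_of_norm_eq_one hn₁ (by rw [norm_neg]; exact hn₂)).mp h1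
      apply hne'
      rw [h2, neg_neg]
  have hθpos : 0 < Real.arccos c := Real.arccos_pos.mpr hc1
  set θ : ℝ := Real.arccos c with hθ
  have hθne : θ ≠ 0 := ne_of_gt hθpos
  set v : E3 := n₂ - c • n₁ with hv
  set w : E3 := n₁ - c • n₂ with hw
  have hcn₁ : ‖c • n₁‖ = |c| := by rw [norm_smul, hn₁, mul_one]; rfl
  have hcn₂ : ‖c • n₂‖ = |c| := by rw [norm_smul, hn₂, mul_one]; rfl
  have hvsq : ‖v‖ ^ 2 = 1 - c ^ 2 := by
    rw [hv, norm_sub_sq_real, real_inner_smul_right, hcc, hcn₁, hn₂, sq_abs]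
    ring
  have hwsq : ‖w‖ ^ 2 = 1 - c ^ 2 := by
    rw [hw, norm_sub_sq_real, real_inner_smul_right, ← hc, hcn₂, hn₁, sq_abs]
    ring
  have hvpos : 0 < ‖v‖ := by
    rw [norm_pos_iff]
    intro h0
    have h1 : (1 : ℝ) - c ^ 2 = 0 := by rw [← hvsq, h0]; simp
    nlinarith
  have hvw : ‖w‖ = ‖v‖ := by
    have := hvsq.trans hwsq.symm
    nlinarith [norm_nonneg v, norm_nonneg w]
  set s : ℝ := ‖v‖ with hs
  have hsne : s ≠ 0 := ne_of_gt hvpos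
  have hL1 : sphLog n₁ n₂ = (θ / s) • v := by
    rw [sphLog, if_neg hne]
  have hL2 : sphLog n₂ n₁ = (θ / s) • w := by
    rw [sphLog, if_neg hne₂, hcc, ← hw, ← hvw]
  have hd : sphDist n₁ n₂ = θ := rfl
  rw [hL1, hL2, hd]
  have hinner : ⟪ξ, (θ / s) • v⟫_ℝ = (θ / s) * ⟪ξ, n₂⟫_ℝ := by
    rw [real_inner_smul_right, hv, inner_sub_right, real_inner_smul_right, hξ]
    ring
  have hsum : (θ / s) • v + (θ / s) • w = ((θ / s) * (1 - c)) • (n₂ + n₁) := by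
    rw [← smul_add, hv, hw]
    module
  rw [hinner, hsum, smul_smul, hcc]
  congr 2
  have h1c : 1 + c ≠ 0 := by linarith
  have h1c' : 1 - c ≠ 0 := by linarith
  have hssq : s ^ 2 = (1 - c) * (1 + c) := by rw [hs, hvsq]; ring
  set p : ℝ := ⟪ξ, n₂⟫_ℝ with hp
  calc θ / s * p / θ ^ 2 * (θ / s * (1 - c)) = p * (1 - c) / s ^ 2 := by
        field_simp
    _ = p / (1 + c) := by rw [hssq]; field_simp
end
end

section
/- Let n₊, μ₊, n₋, μ₋, t be an edge configuration with ⟨n₊,n₋⟩ ≠ −1. Then log_{n₋}(n₊) = sign(⟨n₋, μ₊⟩) · arccos(⟨n₊,n₋⟩) · μ₋. -/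
open scoped InnerProductSpace

noncomputable section
open Classical

lemma inner3 (a b : E3) : ⟪a, b⟫_ℝ = a 0 * b 0 + a 1 * b 1 + a 2 * b 2 := by
  simp [PiLp.inner_apply, Fin.sum_univ_three, mul_comm]

lemma cross3_apply (a b : E3) (i : Fin 3) :
    cross3 a b i = ![a 1 * b 2 - a 2 * b 1, a 2 * b 0 - a 0 * b 2, a 0 * b 1 - a 1 * b 0] i := by
  simp [cross3, cross_apply, EuclideanSpace.equiv]

lemma cross3_dot_cross3 (a b c d : E3) :
    ⟪cross3 a b, cross3 c d⟫_ℝ = ⟪a, c⟫_ℝ * ⟪b, d⟫_ℝ - ⟪a, d⟫_ℝ * ⟪b, c⟫_ℝ := by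
  simp only [inner3, cross3_apply]
  simp [Matrix.cons_val_zero, Matrix.cons_val_one]
  ring

lemma inner_cross3_left (a b : E3) : ⟪cross3 a b, a⟫_ℝ = 0 := by
  simp only [inner3, cross3_apply]; simp; ring

lemma inner_cross3_right (a b : E3) : ⟪cross3 a b, b⟫_ℝ = 0 := by
  simp only [inner3, cross3_apply]; simp; ring

lemma cross3_cross3 (a b c : E3) :
    cross3 (cross3 a b) c = ⟪a, c⟫_ℝ • b - ⟪b, c⟫_ℝ • a := by
  ext i
  fin_cases i <;>
    simp [cross3_apply, inner3, PiLp.sub_apply, PiLp.smul_apply, smul_eq_mul,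
      Fin.sum_univ_three] <;> ring

set_option maxHeartbeats 1000000 in
theorem log_map_using_co_normals_minus (np μp nm μm t : E3)
    (hnp : ‖np‖ = 1) (hμp : ‖μp‖ = 1) (hnm : ‖nm‖ = 1) (hμm : ‖μm‖ = 1) (ht : ‖t‖ = 1)
    (hcp : cross3 np μp = t) (hcm : cross3 nm μm = -t)
    (hne : ⟪np, nm⟫_ℝ ≠ -1) :
    sphLog nm np = (Real.sign ⟪nm, μp⟫_ℝ * Real.arccos ⟪np, nm⟫_ℝ) • μm := by
  have hip : ⟪np, np⟫_ℝ = 1 := by rw [real_inner_self_eq_norm_sq, hnp]; norm_num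
  have him : ⟪nm, nm⟫_ℝ = 1 := by rw [real_inner_self_eq_norm_sq, hnm]; norm_num
  have hiμm : ⟪μm, μm⟫_ℝ = 1 := by rw [real_inner_self_eq_norm_sq, hμm]; norm_num
  have hiμp : ⟪μp, μp⟫_ℝ = 1 := by rw [real_inner_self_eq_norm_sq, hμp]; norm_num
  have hit : ⟪t, t⟫_ℝ = 1 := by rw [real_inner_self_eq_norm_sq, ht]; norm_num
  -- orthogonality of nm and μm
  have h1 : ⟪cross3 nm μm, cross3 nm μm⟫_ℝ = 1 := by rw [hcm]; simpa using hit
  rw [cross3_dot_cross3, him, hiμm, real_inner_comm μm nm] at h1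
  have hoμm' : ⟪μm, nm⟫_ℝ = 0 := by
    have : ⟪μm, nm⟫_ℝ * ⟪μm, nm⟫_ℝ = 0 := by linarith
    exact mul_self_eq_zero.mp this
  have hoμm : ⟪nm, μm⟫_ℝ = 0 := by rw [real_inner_comm]; exact hoμm'
  have h2 : ⟪cross3 np μp, cross3 np μp⟫_ℝ = 1 := by rw [hcp]; exact hit
  rw [cross3_dot_cross3, hip, hiμp, real_inner_comm μp np] at h2
  have hoμp' : ⟪μp, np⟫_ℝ = 0 := by
    have : ⟪μp, np⟫_ℝ * ⟪μp, np⟫_ℝ = 0 := by linarith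
    exact mul_self_eq_zero.mp this
  have hoμp : ⟪np, μp⟫_ℝ = 0 := by rw [real_inner_comm]; exact hoμp'
  have htnp : ⟪t, np⟫_ℝ = 0 := by rw [← hcp]; exact inner_cross3_left _ _
  have ht' : t = cross3 μm nm := by
    have h := congrArg Neg.neg hcm
    rw [neg_neg] at h
    rw [← h]
    ext i; fin_cases i <;> simp [cross3_apply] <;> ring
  set c : ℝ := ⟪np, nm⟫_ℝ with hc
  set s : ℝ := ⟪np, μm⟫_ℝ with hs
  have hcnp : ⟪nm, np⟫_ℝ = c := by rw [hc]; exact real_inner_comm np nm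
  have hsnp : ⟪μm, np⟫_ℝ = s := by rw [hs]; exact real_inner_comm np μm
  have htnp2 : cross3 t np = s • nm - c • μm := by
    rw [ht', cross3_cross3, hsnp, hcnp]
  have hμp2 : μp = cross3 t np := by
    rw [← hcp, cross3_cross3, hip, hoμp']
    simp
  have hcs : c ^ 2 + s ^ 2 = 1 := by
    have h3 : ⟪cross3 t np, cross3 t np⟫_ℝ = 1 := by
      rw [cross3_dot_cross3, hit, hip, htnp]; ring
    rw [htnp2] at h3
    simp only [inner_sub_sub_self, inner_smul_left, inner_smul_right, RCLike.inner_apply,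
      conj_trivial] at h3
    rw [him, hiμm, hoμm, hoμm'] at h3
    nlinarith [h3]
  have hexp : np = c • nm + s • μm := by
    have hv : ⟪np - (c • nm + s • μm), np - (c • nm + s • μm)⟫_ℝ = 0 := by
      simp only [inner_sub_sub_self, inner_add_add_self, inner_smul_left, inner_smul_right,
        inner_add_left, inner_add_right, RCLike.inner_apply, conj_trivial]
      rw [hip, him, hiμm, hoμm, hoμm', hcnp, hsnp]
      linear_combination -hcs
    have h0 := inner_self_eq_zero.mp hv
    exact sub_eq_zero.mp h0
  have hr : ⟪nm, μp⟫_ℝ = s := by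
    rw [hμp2, htnp2, inner_sub_right, inner_smul_right, inner_smul_right, him, hoμm]
    ring
  rw [hr]
  by_cases hszero : s = 0
  · have hc1 : c = 1 := by
      have hfac : (c - 1) * (c + 1) = 0 := by linear_combination hcs - s * hszero
      rcases mul_eq_zero.mp hfac with h | h
      · linarith
      · exact absurd (by linarith) hne
    have hnpeq : np = nm := by rw [hexp, hc1, hszero]; simp
    unfold sphLog
    rw [if_pos hnpeq, hszero]
    simp
  · have hnpne : np ≠ nm := by
      intro h
      apply hszero
      rw [hs, h]
      exact hoμm
    unfold sphLog
    rw [if_neg hnpne]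
    have hdiff : np - ⟪nm, np⟫_ℝ • nm = s • μm := by
      rw [hcnp]
      nth_rewrite 1 [hexp]
      abel
    rw [hdiff, hcnp, norm_smul, hμm, Real.norm_eq_abs, mul_one, smul_smul]
    have hkey : Real.arccos c / |s| * s = Real.sign s * Real.arccos c := by
      rcases lt_or_gt_of_ne hszero with h | h
      · rw [abs_of_neg h, Real.sign_of_neg h, div_neg, neg_mul, div_mul_cancel₀ _ hszero,
          neg_one_mul]
      · rw [abs_of_pos h, Real.sign_of_pos h, div_mul_cancel₀ _ hszero, one_mul]
    rw [hkey]
end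
end

section
/- Let n₊, μ₊, n₋, μ₋, t be an edge configuration with ⟨n₊,n₋⟩ ≠ −1. Then P_{n₋→n₊}(μ₋) = −μ₊ and P_{n₊→n₋}(μ₊) = −μ₋. -/
open scoped InnerProductSpace

noncomputable section
open Classical

/-! Both frames contain `t`, so `n₋` and `μ₋` lie in the plane spanned by `n₊` and `μ₊`: with
`a = ⟪n₋, n₊⟫` and `b = ⟪n₋, μ₊⟫`, the vector triple product gives `n₋ = a n₊ + b μ₊` and
`μ₋ = b n₊ - a μ₊`, with `a² + b² = 1`. The two transports are then a computation in that plane,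
in which `b² = (1 - a)(1 + a)` cancels the denominator `1 + a`. -/

lemma inner_eq_dotProduct (u v : E3) :
    ⟪u, v⟫_ℝ = EuclideanSpace.equiv (Fin 3) ℝ u ⬝ᵥ EuclideanSpace.equiv (Fin 3) ℝ v := by
  rw [EuclideanSpace.inner_eq_star_dotProduct, dotProduct_comm]
  rfl

lemma inner_cross3_cross3 (u v w x : E3) :
    ⟪cross3 u v, cross3 w x⟫_ℝ = ⟪u, w⟫_ℝ * ⟪v, x⟫_ℝ - ⟪u, x⟫_ℝ * ⟪v, w⟫_ℝ := by
  simp only [inner_eq_dotProduct, cross3, ContinuousLinearEquiv.apply_symm_apply]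
  exact cross_dot_cross _ _ _ _

lemma cross3_cross3_s6 (u v w : E3) :
    cross3 (cross3 u v) w = ⟪u, w⟫_ℝ • v - ⟪v, w⟫_ℝ • u := by
  apply (EuclideanSpace.equiv (Fin 3) ℝ).injective
  simp only [inner_eq_dotProduct, cross3, ContinuousLinearEquiv.apply_symm_apply, map_sub, map_smul]
  exact cross_cross_eq_smul_sub_smul _ _ _

lemma cross3_neg_left (u v : E3) : cross3 (-u) v = -cross3 u v := by
  simp only [cross3, map_neg, LinearMap.neg_apply]

lemma cross3_anticomm (u v : E3) : cross3 v u = -cross3 u v := by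
  rw [cross3, cross3, ← cross_anticomm, map_neg]

lemma inner_eq_zero_of_norm_cross3_eq_one {u v : E3} (hu : ‖u‖ = 1) (hv : ‖v‖ = 1)
    (huv : ‖cross3 u v‖ = 1) : ⟪u, v⟫_ℝ = 0 := by
  have lagrange := inner_cross3_cross3 u v u v
  simp only [real_inner_self_eq_norm_sq, hu, hv, huv] at lagrange
  nlinarith [real_inner_comm u v]

lemma cross3_cross3_self {u v : E3} (hu : ‖u‖ = 1) (huv : ⟪u, v⟫_ℝ = 0) :
    cross3 (cross3 u v) u = v := by
  rw [cross3_cross3_s6, real_inner_self_eq_norm_sq, hu, real_inner_comm, huv]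
  simp

section edge

variable {n μ n' μ' : E3}

lemma co_normal_eq_of_cross3_eq_neg (hn' : ‖n'‖ = 1) (hnμ' : ⟪n', μ'⟫_ℝ = 0)
    (h : cross3 n' μ' = -cross3 n μ) : μ' = ⟪n', μ⟫_ℝ • n - ⟪n', n⟫_ℝ • μ := calc
  μ' = cross3 (cross3 n' μ') n' := (cross3_cross3_self hn' hnμ').symm
  _ = ⟪n', μ⟫_ℝ • n - ⟪n', n⟫_ℝ • μ := by
    rw [h, cross3_neg_left, cross3_cross3_s6, neg_sub, real_inner_comm n, real_inner_comm μ]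

lemma normal_eq_of_cross3_eq_neg (hn : ‖n‖ = 1) (hμ : ‖μ‖ = 1) (hnμ : ⟪n, μ⟫_ℝ = 0)
    (hn' : ‖n'‖ = 1) (hμ' : ‖μ'‖ = 1) (hnμ' : ⟪n', μ'⟫_ℝ = 0)
    (h : cross3 n' μ' = -cross3 n μ) : n' = ⟪n', n⟫_ℝ • n + ⟪n', μ⟫_ℝ • μ := calc
  n' = cross3 (cross3 μ' n') μ' := (cross3_cross3_self hμ' (by rwa [real_inner_comm])).symm
  _ = ⟪n, μ'⟫_ℝ • μ - ⟪μ, μ'⟫_ℝ • n := by rw [cross3_anticomm n' μ', h, neg_neg, cross3_cross3_s6]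
  _ = ⟪n', n⟫_ℝ • n + ⟪n', μ⟫_ℝ • μ := by
    rw [co_normal_eq_of_cross3_eq_neg hn' hnμ' h]
    simp only [inner_sub_right, inner_smul_right, real_inner_self_eq_norm_sq, hn, hμ,
      real_inner_comm n μ, hnμ]
    module

lemma ptrans_reflected_co_normal (hn : ‖n‖ = 1) (hnμ : ⟪n, μ⟫_ℝ = 0) {a b : ℝ}
    (hab : a ^ 2 + b ^ 2 = 1) (ha : a ≠ -1) :
    ptrans (a • n + b • μ) n (b • n - a • μ) = -μ := by
  have ha' : 1 + a ≠ 0 := fun h => ha (by linarith)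
  simp only [ptrans, inner_add_right, inner_sub_left, real_inner_smul_left, real_inner_smul_right,
    real_inner_self_eq_norm_sq, hn, real_inner_comm n μ, hnμ, mul_zero, sub_zero, add_zero]
  match_scalars
  · field_simp
    ring
  · field_simp
    linear_combination -hab

lemma ptrans_co_normal_to_reflected (hn : ‖n‖ = 1) (hμ : ‖μ‖ = 1) (hnμ : ⟪n, μ⟫_ℝ = 0) {a b : ℝ}
    (hab : a ^ 2 + b ^ 2 = 1) (ha : a ≠ -1) :
    ptrans n (a • n + b • μ) μ = -(b • n - a • μ) := by
  have ha' : 1 + a ≠ 0 := fun h => ha (by linarith)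
  simp only [ptrans, inner_add_right, inner_add_left, real_inner_smul_left, real_inner_smul_right,
    real_inner_self_eq_norm_sq, hn, hμ, real_inner_comm n μ, hnμ, mul_zero, add_zero, zero_add]
  match_scalars
  · field_simp
    linear_combination -hab
  · field_simp
    ring

end edge

theorem parallel_transport_of_co_normals (np μp nm μm t : E3)
    (hnp : ‖np‖ = 1) (hμp : ‖μp‖ = 1) (hnm : ‖nm‖ = 1) (hμm : ‖μm‖ = 1) (ht : ‖t‖ = 1)
    (hcp : cross3 np μp = t) (hcm : cross3 nm μm = -t)
    (hne : ⟪np, nm⟫_ℝ ≠ -1) :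
    ptrans nm np μm = -μp ∧ ptrans np nm μp = -μm := by
  have hop : ⟪np, μp⟫_ℝ = 0 := inner_eq_zero_of_norm_cross3_eq_one hnp hμp (hcp ▸ ht)
  have hom : ⟪nm, μm⟫_ℝ = 0 :=
    inner_eq_zero_of_norm_cross3_eq_one hnm hμm (by rw [hcm, norm_neg, ht])
  have hc : cross3 nm μm = -cross3 np μp := hcp ▸ hcm
  have hnm_eq := normal_eq_of_cross3_eq_neg hnp hμp hop hnm hμm hom hc
  have hμm_eq := co_normal_eq_of_cross3_eq_neg hnm hom hc
  have ha : ⟪nm, np⟫_ℝ ≠ -1 := by rwa [real_inner_comm]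
  set a := ⟪nm, np⟫_ℝ
  set b := ⟪nm, μp⟫_ℝ
  have hab : a ^ 2 + b ^ 2 = 1 := calc
    a ^ 2 + b ^ 2 = ⟪nm, a • np + b • μp⟫_ℝ := by
      rw [inner_add_right, real_inner_smul_right, real_inner_smul_right]
      ring
    _ = 1 := by rw [← hnm_eq, real_inner_self_eq_norm_sq, hnm, one_pow]
  rw [hμm_eq, hnm_eq]
  exact ⟨ptrans_reflected_co_normal hnp hop hab ha, ptrans_co_normal_to_reflected hnp hμp hop hab ha⟩
end
end

section
/- Let E be a real inner product space, let α > 0, ρ > 0 and x ∈ E. Define the soft-thresholding (shrinkage) point d* = (max(‖x‖ − α/ρ, 0)/‖x‖)·x if x ≠ 0 and d* = 0 if x = 0. Then d* is the unique minimizer over E of the function d ↦ α‖d‖ + (ρ/2)‖d − x‖²; i.e., for every d ∈ E with d ≠ d* one has α‖d*‖ + (ρ/2)‖d* − x‖² < α‖d‖ + (ρ/2)‖d − x‖². -/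
noncomputable section
open Classical

/-- The soft-thresholding (shrinkage) operator. -/
def shrink {E : Type*} [NormedAddCommGroup E] [InnerProductSpace ℝ E] (x : E) (c : ℝ) : E :=
  if x = 0 then 0 else (max (‖x‖ - c) 0 / ‖x‖) • x

/-!
Write `s` for the shrinkage point and `g = ρ • (x - s)`. Then `‖g‖ ≤ α` and `⟪g, s⟫ = α ‖s‖`,
i.e. `g` is a subgradient of `α ‖·‖` at `s`. Expanding `‖d - x‖²` around `s`, the objective at `d`
exceeds its value at `s` by `ρ / 2 ‖d - s‖²` plus `α ‖d‖ - ⟪g, d⟫`, which is nonnegative by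
Cauchy–Schwarz; so the excess is positive whenever `d ≠ s`.
-/

open scoped RealInnerProductSpace

section Shrink

variable {E : Type*} [NormedAddCommGroup E] [InnerProductSpace ℝ E]

theorem shrink_eq_zero_of_norm_le {x : E} {c : ℝ} (h : ‖x‖ ≤ c) : shrink x c = 0 := by
  unfold shrink
  split_ifs
  · rfl
  · rw [max_eq_right (sub_nonpos.mpr h), zero_div, zero_smul]

theorem shrink_eq_of_lt_norm {x : E} {c : ℝ} (h : c < ‖x‖) :
    shrink x c = (1 - c / ‖x‖) • x := by
  unfold shrink
  split_ifs with hx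
  · rw [hx, smul_zero]
  · rw [max_eq_left (sub_nonneg.mpr h.le), sub_div, div_self (norm_ne_zero_iff.mpr hx)]

theorem sub_shrink_of_lt_norm {x : E} {c : ℝ} (h : c < ‖x‖) :
    x - shrink x c = (c / ‖x‖) • x := by
  rw [shrink_eq_of_lt_norm h, sub_smul, one_smul, sub_sub_cancel]

theorem norm_sub_shrink_le {x : E} {c : ℝ} (hc : 0 ≤ c) : ‖x - shrink x c‖ ≤ c := by
  rcases le_or_gt ‖x‖ c with h | h
  · rwa [shrink_eq_zero_of_norm_le h, sub_zero]
  · rw [sub_shrink_of_lt_norm h, norm_smul, Real.norm_eq_abs, abs_div, abs_norm,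
      abs_of_nonneg hc, div_mul_cancel₀ _ (hc.trans_lt h).ne']

theorem inner_sub_shrink_shrink (x : E) (c : ℝ) :
    ⟪x - shrink x c, shrink x c⟫ = c * ‖shrink x c‖ := by
  rcases eq_or_ne x 0 with rfl | hx
  · simp [shrink]
  rcases le_or_gt ‖x‖ c with h | h
  · simp [shrink_eq_zero_of_norm_le h]
  have hx : 0 < ‖x‖ := norm_pos_iff.mpr hx
  have ht : 0 < 1 - c / ‖x‖ := by rw [sub_pos, div_lt_one hx]; exact h
  rw [sub_shrink_of_lt_norm h, shrink_eq_of_lt_norm h, real_inner_smul_left,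
    real_inner_smul_right, real_inner_self_eq_norm_sq, norm_smul, Real.norm_eq_abs,
    abs_of_pos ht]
  field_simp

theorem add_half_mul_norm_sub_sq_le_of_subgradient {α ρ : ℝ} {x s : E}
    (hnorm : ‖ρ • (x - s)‖ ≤ α) (hinner : ⟪ρ • (x - s), s⟫ = α * ‖s‖) (d : E) :
    α * ‖s‖ + ρ / 2 * ‖s - x‖ ^ 2 + ρ / 2 * ‖d - s‖ ^ 2 ≤ α * ‖d‖ + ρ / 2 * ‖d - x‖ ^ 2 := by
  have hsplit : ‖d - x‖ ^ 2 = ‖d - s‖ ^ 2 + 2 * ⟪d - s, s - x⟫ + ‖s - x‖ ^ 2 := by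
    rw [← norm_add_sq_real, sub_add_sub_cancel]
  have hcross : ρ * ⟪d - s, s - x⟫ = ⟪ρ • (x - s), s⟫ - ⟪ρ • (x - s), d⟫ := by
    rw [real_inner_smul_left, real_inner_smul_left, ← mul_sub, ← inner_sub_right]
    congr 1
    rw [← inner_neg_neg, neg_sub, neg_sub, real_inner_comm]
  have hcs : ⟪ρ • (x - s), d⟫ ≤ α * ‖d‖ :=
    (real_inner_le_norm _ _).trans (mul_le_mul_of_nonneg_right hnorm (norm_nonneg d))
  rw [hsplit]
  linarith

end Shrink

theorem shrink_is_unique_minimizer {E : Type*} [NormedAddCommGroup E] [InnerProductSpace ℝ E]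
    (α ρ : ℝ) (hα : 0 < α) (hρ : 0 < ρ) (x : E) :
    ∀ d : E, d ≠ shrink x (α / ρ) →
      α * ‖shrink x (α / ρ)‖ + ρ / 2 * ‖shrink x (α / ρ) - x‖ ^ 2
        < α * ‖d‖ + ρ / 2 * ‖d - x‖ ^ 2 := by
  intro d hd
  set s := shrink x (α / ρ)
  have hnorm : ‖ρ • (x - s)‖ ≤ α := by
    rw [norm_smul, Real.norm_of_nonneg hρ.le, ← le_div_iff₀' hρ]
    exact norm_sub_shrink_le (div_pos hα hρ).le
  have hinner : ⟪ρ • (x - s), s⟫ = α * ‖s‖ := by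
    rw [real_inner_smul_left, inner_sub_shrink_shrink, ← mul_assoc, mul_div_cancel₀ _ hρ.ne']
  have hgrowth : 0 < ρ / 2 * ‖d - s‖ ^ 2 := by
    have : 0 < ‖d - s‖ := norm_pos_iff.mpr (sub_ne_zero.mpr hd)
    positivity
  linarith [add_half_mul_norm_sub_sq_le_of_subgradient hnorm hinner d]
end
end
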